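/- arXiv:2006.05458 — 3 statements merged into one kernel-verified Lean document; each statement's English description precedes it below -/
import Mathlib

section
/- For the Gumbel distribution with c = 0, the δ-record probability for the n-th observation equals 1 / ((n−1)e^{δ} + 1). -/
/-!
With `a = k e^δ + 1`, the integrand `F(x - δ)^k f(x)` collapses to `e^{-x} exp(-a e^{-x})`, the
derivative of the increasing function `exp(-a e^{-x}) / a`, which goes from `0` at `-∞` to `1 / a`
at `+∞`.
-/

open MeasureTheory Real Filter Topology

section DerivNonneg

variable {g g' : ℝ → ℝ} {m l : ℝ}

theorem integrable_deriv_of_nonneg (hderiv : ∀ x, HasDerivAt g (g' x) x) (hg' : ∀ x, 0 ≤ g' x)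
    (hbot : Tendsto g atBot (𝓝 m)) (htop : Tendsto g atTop (𝓝 l)) : Integrable g' := by
  have hcont : Continuous g := continuous_iff_continuousAt.2 fun x ↦ (hderiv x).continuousAt
  have hint : ∀ a b, IntervalIntegrable g' volume a b := fun a b ↦
    intervalIntegral.intervalIntegrable_deriv_of_nonneg hcont.continuousOn
      (fun x _ ↦ hderiv x) fun x _ ↦ hg' x
  refine integrable_of_intervalIntegral_norm_tendsto (l - m)
    (fun i ↦ (hint (-i) i).1) tendsto_neg_atTop_atBot tendsto_id ?_
  have hFTC : ∀ i, ∫ x in -i..i, ‖g' x‖ = g i - g (-i) := fun i ↦ by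
    simp_rw [Real.norm_of_nonneg (hg' _)]
    exact intervalIntegral.integral_eq_sub_of_hasDerivAt (fun x _ ↦ hderiv x) (hint (-i) i)
  simpa only [hFTC, Function.comp_def] using htop.sub (hbot.comp tendsto_neg_atTop_atBot)

theorem integral_deriv_of_nonneg (hderiv : ∀ x, HasDerivAt g (g' x) x) (hg' : ∀ x, 0 ≤ g' x)
    (hbot : Tendsto g atBot (𝓝 m)) (htop : Tendsto g atTop (𝓝 l)) : ∫ x, g' x = l - m :=
  integral_of_hasDerivAt_of_tendsto hderiv (integrable_deriv_of_nonneg hderiv hg' hbot htop)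
    hbot htop

end DerivNonneg

theorem hasDerivAt_exp_neg_mul_exp_neg (a x : ℝ) :
    HasDerivAt (fun x ↦ exp (-(a * exp (-x)))) (a * (exp (-x) * exp (-(a * exp (-x))))) x :=
  ((hasDerivAt_neg x).exp.const_mul a).fun_neg.exp.congr_deriv (by ring)

theorem integral_exp_neg_mul_exp_neg_mul_exp_neg {a : ℝ} (ha : 0 < a) :
    ∫ x, exp (-x) * exp (-(a * exp (-x))) = a⁻¹ := by
  have hbot : Tendsto (fun x ↦ exp (-(a * exp (-x))) / a) atBot (𝓝 0) := by
    have harg : Tendsto (fun x ↦ -(a * exp (-x))) atBot atBot :=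
      tendsto_neg_atTop_atBot.comp <|
        (tendsto_exp_atTop.comp tendsto_neg_atBot_atTop).const_mul_atTop ha
    rw [← zero_div a]
    exact (tendsto_exp_atBot.comp harg).div_const a
  have htop : Tendsto (fun x ↦ exp (-(a * exp (-x))) / a) atTop (𝓝 a⁻¹) := by
    have harg : Tendsto (fun x ↦ -(a * exp (-x))) atTop (𝓝 0) := by
      simpa using ((tendsto_exp_atBot.comp tendsto_neg_atTop_atBot).const_mul a).neg
    have hlim := ((continuous_exp.tendsto 0).comp harg).div_const a
    rwa [exp_zero, one_div] at hlim
  have hderiv (x : ℝ) : HasDerivAt (fun x ↦ exp (-(a * exp (-x))) / a)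
      (exp (-x) * exp (-(a * exp (-x)))) x :=
    ((hasDerivAt_exp_neg_mul_exp_neg a x).div_const a).congr_deriv (mul_div_cancel_left₀ _ ha.ne')
  simpa using integral_deriv_of_nonneg hderiv (fun x ↦ by positivity) hbot htop

theorem exp_neg_exp_neg_sub_pow_mul (δ x : ℝ) (k : ℕ) :
    exp (-exp (-(x - δ))) ^ k * (exp (-x) * exp (-exp (-x)))
      = exp (-x) * exp (-((k * exp δ + 1) * exp (-x))) := by
  simp only [← exp_nat_mul, ← exp_add]
  congr 1
  rw [neg_sub, sub_eq_add_neg, exp_add]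
  ring

/-- Gumbel distribution, no drift (`c = 0`): the δ-record probability of the `n`-th
observation is `1 / ((n−1)e^{δ} + 1)`. -/
theorem stmt8 (δ : ℝ) (n : ℕ) (hn : 1 ≤ n) :
    (∫ x : ℝ, (exp (-exp (-(x - δ)))) ^ (n - 1) * (exp (-x) * exp (-exp (-x))))
      = 1 / (((n : ℝ) - 1) * exp δ + 1) := by
  simp_rw [exp_neg_exp_neg_sub_pow_mul]
  rw [integral_exp_neg_mul_exp_neg_mul_exp_neg (by positivity), Nat.cast_sub hn, one_div,
    Nat.cast_one]
end

section
/- For the Gumbel distribution with c > 0, the asymptotic δ-record probability is p_δ(c) = (1 − e^{−c}) / (e^{δ}e^{−c} + 1 − e^{−c}), and this is a logistic function of −δ. -/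
open MeasureTheory Real Set

/-!
The Gumbel CDF is `F x = exp (-exp (-x))`, so `∏ F (x + c i - δ)` is the exponential of minus a
geometric series: it equals `exp (-q e^δ e^{-x})` with `q = e^{-c} / (1 - e^{-c})`. Multiplied by
the density `e^{-x} exp (-e^{-x})` this is `exp (-b e^{-x}) e^{-x}` with `b = 1 + q e^δ`, and the
substitution `y = e^{-x}` turns its integral into `∫_0^∞ e^{-b y} dy = 1 / b`.
-/

theorem hasSum_exp_neg_add_mul_succ (a : ℝ) {c : ℝ} (hc : 0 < c) :
    HasSum (fun i : ℕ ↦ exp (-(a + c * (i + 1)))) (exp (-a) * (exp (-c) / (1 - exp (-c)))) := by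
  have hq : exp (-c) < 1 := exp_lt_one_iff.mpr (neg_neg_of_pos hc)
  have h := (hasSum_geometric_of_lt_one (exp_pos _).le hq).mul_left (exp (-a) * exp (-c))
  rw [← mul_div_assoc, div_eq_mul_inv]
  refine h.congr_fun fun i ↦ ?_
  rw [← exp_nat_mul, ← exp_add, ← exp_add]
  ring_nf

theorem tprod_exp_neg_exp_neg_add_mul_succ (a : ℝ) {c : ℝ} (hc : 0 < c) :
    ∏' i : ℕ, exp (-exp (-(a + c * (i + 1)))) = exp (-(exp (-a) * (exp (-c) / (1 - exp (-c))))) :=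
  (hasSum_exp_neg_add_mul_succ a hc).neg.rexp.tprod_eq

section Substitution

variable {E : Type*} [NormedAddCommGroup E] [NormedSpace ℝ E]

theorem integral_comp_exp (g : ℝ → E) : ∫ x, exp x • g (exp x) = ∫ y in Ioi 0, g y := by
  rw [← range_exp, ← image_univ, ← setIntegral_univ]
  simpa [abs_of_pos (exp_pos _)] using (integral_image_eq_integral_abs_deriv_smul
    MeasurableSet.univ (fun x _ ↦ (hasDerivAt_exp x).hasDerivWithinAt)
    (fun x _ y _ hxy ↦ exp_injective hxy) g).symm

theorem integral_comp_exp_neg (g : ℝ → E) :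
    ∫ x, exp (-x) • g (exp (-x)) = ∫ y in Ioi 0, g y := by
  rw [integral_neg_eq_self (fun x ↦ exp x • g (exp x)), integral_comp_exp]

end Substitution

theorem integral_exp_neg_mul_exp_neg_mul_exp_neg_s9 {b : ℝ} (hb : 0 < b) :
    ∫ x, exp (-(b * exp (-x))) * exp (-x) = 1 / b := by
  have hsubst := integral_comp_exp_neg (fun y ↦ exp (-b * y))
  simp only [smul_eq_mul] at hsubst
  rw [integral_exp_mul_Ioi (neg_lt_zero.mpr hb)] at hsubst
  simpa [mul_comm, div_eq_mul_inv] using hsubst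

theorem div_eq_one_div_one_add_div_mul {r : ℝ} (hr : r ≠ 1) (t : ℝ) :
    (1 - r) / (t * r + 1 - r) = 1 / (1 + r / (1 - r) * t) := by
  have : 1 - r ≠ 0 := sub_ne_zero.mpr hr.symm
  rw [div_mul_eq_mul_div, one_add_div this, one_div_div]
  ring_nf

theorem gumbel_integrand_eq (x δ : ℝ) {c : ℝ} (hc : 0 < c) :
    (∏' i : ℕ, exp (-exp (-(x + c * (i + 1) - δ)))) * (exp (-x) * exp (-exp (-x)))
      = exp (-((1 + exp (-c) / (1 - exp (-c)) * exp δ) * exp (-x))) * exp (-x) := by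
  have hshift : ∀ i : ℕ, x + c * (i + 1) - δ = x - δ + c * (i + 1) := fun i ↦ by ring
  simp_rw [hshift, tprod_exp_neg_exp_neg_add_mul_succ (x - δ) hc]
  set q := exp (-c) / (1 - exp (-c))
  have hrate : exp (-(x - δ)) * q = q * exp δ * exp (-x) := by
    rw [mul_comm, mul_assoc, ← exp_add, neg_sub, sub_eq_add_neg]
  rw [hrate, add_mul, one_mul, neg_add, exp_add]
  ring

/-- Gumbel LDM with `c > 0`: the asymptotic δ-record probability is
`p_δ(c) = (1 − e^{−c}) / (e^{δ}e^{−c} + 1 − e^{−c})`, which is a logistic function of `−δ`: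
`p_δ(c) = 1 / (1 + (e^{−c}/(1−e^{−c})) e^{δ})`. -/
theorem stmt9 (c δ : ℝ) (hc : 0 < c) :
    (∫ x : ℝ, (∏' i : ℕ, exp (-exp (-(x + c * (i + 1) - δ)))) *
        (exp (-x) * exp (-exp (-x))))
      = (1 - exp (-c)) / (exp δ * exp (-c) + 1 - exp (-c)) ∧
    (1 - exp (-c)) / (exp δ * exp (-c) + 1 - exp (-c))
      = 1 / (1 + (exp (-c) / (1 - exp (-c))) * exp δ) := by
  have hq : exp (-c) < 1 := exp_lt_one_iff.mpr (neg_neg_of_pos hc)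
  have hlogistic := div_eq_one_div_one_add_div_mul hq.ne (exp δ)
  refine ⟨?_, hlogistic⟩
  have hrate : 0 < 1 + exp (-c) / (1 - exp (-c)) * exp δ := by
    have h1q := sub_pos.mpr hq
    positivity
  simp_rw [gumbel_integrand_eq _ δ hc, integral_exp_neg_mul_exp_neg_mul_exp_neg_s9 hrate, hlogistic]
end

section
/- If μ⁺ = ∞, then in the linear drift model Y_n = X_n + cn the total number of δ-records N_{∞,δ} is infinite almost surely, for every c, δ ∈ ℝ. -/
/-!
Take `K = max δ 0 + |c| + 1`. Since `∑ₙ P(X₁ > K n) ≥ E[X₁⁺] / K = ∞` and the events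
`{Xₙ > K n}` are independent, the second Borel–Cantelli lemma gives `Xₙ > K n`, hence
`Yₙ > (max δ 0 + 1) n`, infinitely often almost surely. But if there were only finitely many
δ-records, every later `Yₙ` would be at most `δ` above some earlier `Yⱼ`, so `Yₙ` would grow
at most like `max δ 0 · n`.
-/

open MeasureTheory ProbabilityTheory Set Filter
open scoped ENNReal

def IsDeltaRecord (Y : ℕ → ℝ) (δ : ℝ) (n : ℕ) : Prop :=
  1 ≤ n ∧ ∀ j, 1 ≤ j → j < n → Y j + δ < Y n

theorem exists_le_add_mul_of_finite_deltaRecords {Y : ℕ → ℝ} {δ D : ℝ} (hδD : δ ≤ D)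
    (hD : 0 ≤ D) (hfin : {n | IsDeltaRecord Y δ n}.Finite) :
    ∃ B, ∀ n, 1 ≤ n → Y n ≤ B + D * n := by
  obtain ⟨N, hN⟩ := hfin.bddAbove
  obtain ⟨B, hB⟩ := ((Set.finite_Icc 1 N).image Y).bddAbove
  refine ⟨B, fun n => ?_⟩
  induction n using Nat.strong_induction_on with
  | _ n ih =>
    intro hn
    have hDn : 0 ≤ D * n := by positivity
    by_cases hnN : n ≤ N
    · linarith [hB (Set.mem_image_of_mem Y ⟨hn, hnN⟩)]
    · obtain ⟨j, hj, hjn, hYn⟩ : ∃ j, 1 ≤ j ∧ j < n ∧ Y n ≤ Y j + δ := by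
        simpa [IsDeltaRecord, hn] using fun h => hnN (hN h)
      have hjn' : (j : ℝ) + 1 ≤ n := by exact_mod_cast hjn
      nlinarith [ih j hjn hj, mul_le_mul_of_nonneg_left hjn' hD]

theorem infinite_deltaRecords_of_frequently_lt {Y : ℕ → ℝ} {δ : ℝ}
    (hY : ∃ᶠ n in atTop, (max δ 0 + 1) * n < Y n) : {n | IsDeltaRecord Y δ n}.Infinite := by
  intro hfin
  obtain ⟨B, hB⟩ :=
    exists_le_add_mul_of_finite_deltaRecords (le_max_left δ 0) (le_max_right δ 0) hfin
  obtain ⟨n, hnY, hn, hnB⟩ :=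
    (hY.and_eventually ((eventually_ge_atTop 1).and (eventually_gt_atTop ⌈B⌉₊))).exists
  have hBn : B < n := (Nat.le_ceil B).trans_lt (by exact_mod_cast hnB)
  linarith [hB n hn]

theorem lintegral_ofReal_le_mul_tsum_measure_Ioi (ν : Measure ℝ) {K : ℝ} (hK : 0 < K) :
    ∫⁻ x, ENNReal.ofReal x ∂ν ≤ ENNReal.ofReal K * ∑' n : ℕ, ν (Ioi (K * n)) := by
  have hmeas : ∀ n : ℕ, Measurable ((Ioi (K * n)).indicator (1 : ℝ → ℝ≥0∞)) :=
    fun n => measurable_one.indicator measurableSet_Ioi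
  -- `x ≤ K ⌈x / K⌉`, and `⌈x / K⌉` counts the `n` with `K n < x`.
  have hpt : ∀ x, ENNReal.ofReal x ≤
      ENNReal.ofReal K * ∑' n : ℕ, (Ioi (K * n)).indicator (1 : ℝ → ℝ≥0∞) x := by
    intro x
    have hcount : ∑' n : ℕ, (Ioi (K * n)).indicator (1 : ℝ → ℝ≥0∞) x = ⌈x / K⌉₊ := by
      have hiff : ∀ n : ℕ, x ∈ Ioi (K * n) ↔ n ∈ Finset.range ⌈x / K⌉₊ := fun n => by
        rw [mem_Ioi, Finset.mem_range, Nat.lt_ceil, lt_div_iff₀ hK, mul_comm]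
      rw [tsum_eq_sum (s := Finset.range ⌈x / K⌉₊) fun n hn =>
        indicator_of_notMem (mt (hiff n).1 hn) _]
      rw [Finset.sum_congr rfl fun n hn => indicator_of_mem ((hiff n).2 hn) _]
      simp
    rw [hcount, ← ENNReal.ofReal_natCast, ← ENNReal.ofReal_mul hK.le]
    exact ENNReal.ofReal_le_ofReal ((div_le_iff₀' hK).1 (Nat.le_ceil _))
  calc ∫⁻ x, ENNReal.ofReal x ∂ν
      ≤ ∫⁻ x, ENNReal.ofReal K * ∑' n : ℕ, (Ioi (K * n)).indicator 1 x ∂ν := lintegral_mono hpt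
    _ = ENNReal.ofReal K * ∑' n : ℕ, ν (Ioi (K * n)) := by
      rw [lintegral_const_mul _ (Measurable.tsum hmeas),
        lintegral_tsum fun n => (hmeas n).aemeasurable]
      simp_rw [lintegral_indicator_one measurableSet_Ioi]

theorem tsum_measure_Ioi_eq_top_of_lintegral_ofReal_eq_top {ν : Measure ℝ} {K : ℝ} (hK : 0 < K)
    (hν : ∫⁻ x, ENNReal.ofReal x ∂ν = ∞) : ∑' n : ℕ, ν (Ioi (K * n)) = ∞ := by
  have h := hν ▸ lintegral_ofReal_le_mul_tsum_measure_Ioi ν hK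
  exact (ENNReal.mul_eq_top.1 (top_le_iff.1 h)).elim And.right
    fun h => absurd h.1 ENNReal.ofReal_ne_top

theorem lintegral_ofReal_withDensity_eq_top {f : ℝ → ℝ} (hf : ∀ x, 0 ≤ f x)
    (hfm : AEMeasurable f) (hmu : ¬ IntegrableOn (fun x => x * f x) (Ioi 0)) :
    ∫⁻ x, ENNReal.ofReal x ∂volume.withDensity (fun x => ENNReal.ofReal (f x)) = ∞ := by
  rw [lintegral_withDensity_eq_lintegral_mul₀ hfm.ennreal_ofReal
    ENNReal.measurable_ofReal.aemeasurable]
  by_contra hfin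
  refine hmu ⟨(aemeasurable_id.mul hfm).aestronglyMeasurable.restrict, ?_⟩
  calc ∫⁻ x in Ioi 0, ‖x * f x‖ₑ
      = ∫⁻ x in Ioi 0, ENNReal.ofReal (f x) * ENNReal.ofReal x := by
        refine setLIntegral_congr_fun measurableSet_Ioi fun x hx => ?_
        rw [Real.enorm_of_nonneg (mul_nonneg hx.le (hf x)), ENNReal.ofReal_mul hx.le,
          mul_comm]
    _ ≤ ∫⁻ x, ENNReal.ofReal (f x) * ENNReal.ofReal x := setLIntegral_le_lintegral _ _
    _ < ∞ := lt_top_iff_ne_top.2 hfin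

theorem map_eq_withDensity_of_cdf {Ω : Type*} [MeasurableSpace Ω] {μ : Measure Ω}
    [IsProbabilityMeasure μ] {Y : Ω → ℝ} (hY : Measurable Y) {f : ℝ → ℝ} (hf : ∀ x, 0 ≤ f x)
    (hfint : Integrable f) (hcdf : ∀ t, μ {ω | Y ω ≤ t} = ENNReal.ofReal (∫ s in Iic t, f s)) :
    μ.map Y = volume.withDensity (fun x => ENNReal.ofReal (f x)) := by
  refine Measure.ext_of_Iic _ _ fun t => ?_
  rw [Measure.map_apply hY measurableSet_Iic, withDensity_apply _ measurableSet_Iic,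
    ← ofReal_integral_eq_lintegral_ofReal hfint.integrableOn (ae_of_all _ hf)]
  exact hcdf t

theorem ProbabilityTheory.iIndepFun.iIndepSet_preimage {Ω ι β : Type*} [MeasurableSpace Ω]
    [MeasurableSpace β] {μ : Measure Ω} {X : ι → Ω → β} (hX : iIndepFun X μ)
    (hXm : ∀ i, Measurable (X i)) {t : ι → Set β} (ht : ∀ i, MeasurableSet (t i)) :
    iIndepSet (fun i => X i ⁻¹' t i) μ :=
  (iIndepSet_iff_meas_biInter fun i => hXm i (ht i)).2 fun S =>
    hX.measure_inter_preimage_eq_mul S fun i _ => ht i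

theorem stmt17_general {Ω : Type*} [MeasureSpace Ω] [IsProbabilityMeasure (ℙ : Measure Ω)]
    (X : ℕ → Ω → ℝ) (hXm : ∀ n, Measurable (X n))
    (hindep : iIndepFun X ℙ)
    (f : ℝ → ℝ) (hf : ∀ x, 0 ≤ f x)
    (hdist : ∀ n t, ℙ {ω | X n ω ≤ t} = ENNReal.ofReal (∫ s in Iic t, f s))
    (hprob : ∫ s : ℝ, f s = 1)
    (hmu : ¬ IntegrableOn (fun x => x * f x) (Ioi (0 : ℝ))) :
    ∀ c δ : ℝ, ∀ᵐ ω ∂(ℙ : Measure Ω),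
      {n : ℕ | 1 ≤ n ∧ ∀ j, 1 ≤ j → j < n →
        X j ω + c * j + δ < X n ω + c * n}.Infinite := by
  intro c δ
  have hfint : Integrable f := Integrable.of_integral_ne_zero (by simp [hprob])
  set K := max δ 0 + |c| + 1
  have hK : 0 < K := by positivity
  have hsm : ∀ n : ℕ, MeasurableSet (X n ⁻¹' Ioi (K * n)) := fun n => hXm n measurableSet_Ioi
  have hdiv : ∑' n : ℕ, ℙ (X n ⁻¹' Ioi (K * n)) = ∞ := by
    simp_rw [← Measure.map_apply (hXm _) measurableSet_Ioi,
      map_eq_withDensity_of_cdf (hXm _) hf hfint (hdist _)]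
    exact tsum_measure_Ioi_eq_top_of_lintegral_ofReal_eq_top hK
      (lintegral_ofReal_withDensity_eq_top hf hfint.aemeasurable hmu)
  have hlimsup := measure_limsup_eq_one hsm
    (hindep.iIndepSet_preimage hXm fun _ => measurableSet_Ioi) hdiv
  filter_upwards [(mem_ae_iff_prob_eq_one (MeasurableSet.measurableSet_limsup hsm)).2 hlimsup]
    with ω hω
  refine infinite_deltaRecords_of_frequently_lt ((mem_limsup_iff_frequently_mem.1 hω).mono
    fun n hn => ?_)
  have hcn : -|c| * n ≤ c * n := mul_le_mul_of_nonneg_right (neg_abs_le c) n.cast_nonneg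
  simp only [mem_preimage, mem_Ioi] at hn
  linarith

/-- If the iid variables have infinite right-tail expectation (`μ⁺ = ∫_0^∞ x f(x) dx = ∞`),
then in the linear drift model `Y_n = X_n + cn` the total number of δ-records is infinite
almost surely, for every `c, δ ∈ ℝ`. (Observation `n ≥ 1` is a δ-record when
`Y_n > max(Y_1, …, Y_{n−1}) + δ`; `Y_1` is a δ-record by convention.) -/
theorem stmt17 {Ω : Type*} [MeasureSpace Ω] [IsProbabilityMeasure (ℙ : Measure Ω)]
    (X : ℕ → Ω → ℝ) (hXm : ∀ n, Measurable (X n))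
    (hindep : iIndepFun X ℙ)
    (f : ℝ → ℝ) (hf : ∀ x, 0 ≤ f x) (hfm : Measurable f)
    (hdist : ∀ n t, ℙ {ω | X n ω ≤ t} = ENNReal.ofReal (∫ s in Iic t, f s))
    (hprob : ∫ s : ℝ, f s = 1)
    (hmu : ¬ IntegrableOn (fun x => x * f x) (Ioi (0 : ℝ))) :
    ∀ c δ : ℝ, ∀ᵐ ω ∂(ℙ : Measure Ω),
      {n : ℕ | 1 ≤ n ∧ ∀ j, 1 ≤ j → j < n →
        X j ω + c * j + δ < X n ω + c * n}.Infinite :=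
  stmt17_general X hXm hindep f hf hdist hprob hmu
end
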